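/- Let X be a real Banach space and T : X ⇉ X* a maximal monotone operator. If h ∈ H(T), then J h ∈ H(T); that is, the family H(T) is invariant under the transform J. -/

import Mathlib

/-! `J h` is a supremum of continuous affine functions, hence convex and lower semicontinuous.
By maximality every `p` has some `q ∈ T` with `⟨p - q, p* - q*⟩ ≤ 0`, and testing `J h p` at `q`
gives `J h p ≥ ⟨p, p*⟩`. Conversely, at `p ∈ T` the convex function `h` touches the duality
product from above; comparing the two along the segment from `p` to `q` and letting the step tend
to `0` gives `⟨p, q*⟩ + ⟨q, p*⟩ - h q ≤ ⟨p, p*⟩`, i.e. `J h p ≤ ⟨p, p*⟩`. -/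

/- Setting: `X` is a real Banach space, `StrongDual ℝ X` its topological dual.
A point-to-set operator `T : X ⇉ X*` is identified with its graph,
a subset of `X × StrongDual ℝ X`.  Extended-real-valued functions
(`ℝ ∪ {+∞}`) are modelled by `EReal`. -/

noncomputable section

variable {X : Type*} [NormedAddCommGroup X] [NormedSpace ℝ X]

/-- The duality pairing `⟨x, x*⟩ = x*(x)` of a pair `p = (x, x*)`. -/
def pairingFn (p : X × StrongDual ℝ X) : ℝ := p.2 p.1

/-- Convexity for extended-real-valued functions. -/
def EConvexOn {E : Type*} [AddCommMonoid E] [Module ℝ E] (h : E → EReal) : Prop :=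
  ∀ p q : E, ∀ a b : ℝ, 0 ≤ a → 0 ≤ b → a + b = 1 →
    h (a • p + b • q) ≤ (a : EReal) * h p + (b : EReal) * h q

/-- `T` is a monotone operator: `⟨x - y, x* - y*⟩ ≥ 0` on the graph. -/
def MonotoneOp (T : Set (X × StrongDual ℝ X)) : Prop :=
  ∀ p ∈ T, ∀ q ∈ T, 0 ≤ (p.2 - q.2) (p.1 - q.1)

/-- `T` is maximal monotone. -/
def MaximalMonotoneOp (T : Set (X × StrongDual ℝ X)) : Prop :=
  MonotoneOp T ∧
    ∀ p : X × StrongDual ℝ X, (∀ q ∈ T, 0 ≤ (p.2 - q.2) (p.1 - q.1)) → p ∈ T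

/-- The transform `J h (x, x*) = sup_{(y, y*)} ⟨x, y*⟩ + ⟨y, x*⟩ - h (y, y*)`,
i.e. `J h (x, x*) = h* (x*, x)` via the canonical injection `X ↪ X**`. -/
def JT (h : X × StrongDual ℝ X → EReal) : X × StrongDual ℝ X → EReal :=
  fun p => ⨆ q : X × StrongDual ℝ X, (((q.2 p.1 + p.2 q.1 : ℝ) : EReal) - h q)

/-- The family `H(T)` of convex lower semicontinuous functions on `X × X*`
majorizing the duality product and coinciding with it on `T`. -/
def HT (T : Set (X × StrongDual ℝ X)) : Set (X × StrongDual ℝ X → EReal) :=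
  { h | EConvexOn h ∧ LowerSemicontinuous h ∧
      (∀ p : X × StrongDual ℝ X, (pairingFn p : EReal) ≤ h p) ∧
      (∀ p ∈ T, h p = (pairingFn p : EReal)) }

/-- The subfamily `H_a(T) = { h ∈ H(T) | h ≥ J h }`. -/
def Ha (T : Set (X × StrongDual ℝ X)) : Set (X × StrongDual ℝ X → EReal) :=
  { h | h ∈ HT T ∧ JT h ≤ h }

/-- For `h ∈ H(T)`, the family `L(h) = { g ∈ H(T) | h ≥ g ≥ J g }`. -/
def Lfam (T : Set (X × StrongDual ℝ X)) (h : X × StrongDual ℝ X → EReal) :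
    Set (X × StrongDual ℝ X → EReal) :=
  { g | g ∈ HT T ∧ g ≤ h ∧ JT g ≤ g }

/-- The Fenchel–Legendre conjugate `f*(x*) = sup_x ⟨x, x*⟩ - f x`. -/
def fconj (f : X → EReal) : StrongDual ℝ X → EReal :=
  fun x' => ⨆ x : X, (((x' x : ℝ) : EReal) - f x)

/-- The `ε`-subdifferential:
`∂_ε f (x) = { x* | f y ≥ f x + ⟨y - x, x*⟩ - ε for all y }`. -/
def epsSubdiff (f : X → EReal) (ε : ℝ) (x : X) : Set (StrongDual ℝ X) :=
  { x' | ∀ y : X, f x + ((x' (y - x) - ε : ℝ) : EReal) ≤ f y }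

/-- The graph of the subdifferential `∂f = ∂_0 f`. -/
def subdiffGraph (f : X → EReal) : Set (X × StrongDual ℝ X) :=
  { p | p.2 ∈ epsSubdiff f 0 p.1 }

/-- The `ε`-enlargement `T^ε (x) = { x* | ⟨x - y, x* - y*⟩ ≥ -ε for all (y, y*) ∈ T }`. -/
def enl (T : Set (X × StrongDual ℝ X)) (ε : ℝ) (x : X) :
    Set (StrongDual ℝ X) :=
  { x' | ∀ q ∈ T, -ε ≤ (x' - q.2) (x - q.1) }

/-- The Fitzpatrick function
`φ_T (x, x*) = sup_{(y, y*) ∈ T} ⟨x, y*⟩ + ⟨y, x*⟩ - ⟨y, y*⟩`. -/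
def fitz (T : Set (X × StrongDual ℝ X)) : X × StrongDual ℝ X → EReal :=
  fun p => ⨆ q ∈ T, ((q.2 p.1 + p.2 q.1 - q.2 q.1 : ℝ) : EReal)


theorem EConvexOn.iSup {E ι : Type*} [AddCommMonoid E] [Module ℝ E] {f : ι → E → EReal}
    (hf : ∀ i, EConvexOn (f i)) : EConvexOn (⨆ i, f i) := by
  intro p q a b ha hb hab
  simp only [iSup_apply]
  refine iSup_le fun i => (hf i p q a b ha hb hab).trans ?_
  exact add_le_add (mul_le_mul_of_nonneg_left (le_iSup (f · p) i) (EReal.coe_nonneg.2 ha))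
    (mul_le_mul_of_nonneg_left (le_iSup (f · q) i) (EReal.coe_nonneg.2 hb))

theorem econvexOn_coe_sub {E : Type*} [AddCommGroup E] [Module ℝ E] (ℓ : E →ₗ[ℝ] ℝ)
    {c : EReal} (hc : c ≠ ⊥) : EConvexOn fun p => (ℓ p : EReal) - c := by
  intro p q a b _ _ hab
  induction c with
  | bot => exact absurd rfl hc
  | top => simp
  | coe c =>
    have key : ℓ (a • p + b • q) - c = a * (ℓ p - c) + b * (ℓ q - c) := by
      simp only [map_add, map_smul, smul_eq_mul]
      linear_combination c * hab
    simp only [← EReal.coe_sub, ← EReal.coe_mul, ← EReal.coe_add, key, le_refl]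

theorem continuous_coe_sub {α : Type*} [TopologicalSpace α] {f : α → ℝ} (hf : Continuous f)
    (c : EReal) : Continuous fun a => (f a : EReal) - c := by
  induction c with
  | bot => simpa using continuous_const
  | top => simpa using continuous_const
  | coe c =>
    exact (continuous_coe_real_ereal.comp (hf.sub continuous_const)).congr fun a => EReal.coe_sub _ _

/-- `JT h` is the supremum over `r` of the affine functions `coupling r - h r`. -/
def coupling (r : X × StrongDual ℝ X) : X × StrongDual ℝ X →L[ℝ] ℝ :=
  r.2.comp (ContinuousLinearMap.fst ℝ X (StrongDual ℝ X)) +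
    (ContinuousLinearMap.apply ℝ ℝ r.1).comp (ContinuousLinearMap.snd ℝ X (StrongDual ℝ X))

@[simp]
theorem coupling_apply (r p : X × StrongDual ℝ X) : coupling r p = r.2 p.1 + p.2 r.1 := rfl

theorem JT_eq_iSup (h : X × StrongDual ℝ X → EReal) :
    JT h = ⨆ r : X × StrongDual ℝ X, fun p => (coupling r p : EReal) - h r := by
  ext p
  simp [JT, iSup_apply]

theorem coupling_sub_le_JT (h : X × StrongDual ℝ X → EReal) (p q : X × StrongDual ℝ X) :
    (coupling q p : EReal) - h q ≤ JT h p :=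
  le_iSup (fun q => ((q.2 p.1 + p.2 q.1 : ℝ) : EReal) - h q) q

theorem econvexOn_JT {h : X × StrongDual ℝ X → EReal} (hh : ∀ q, h q ≠ ⊥) :
    EConvexOn (JT h) := by
  rw [JT_eq_iSup]
  exact EConvexOn.iSup (f := fun r p => (coupling r p : EReal) - h r) fun r =>
    econvexOn_coe_sub (coupling r).toLinearMap (hh r)

theorem lowerSemicontinuous_JT (h : X × StrongDual ℝ X → EReal) :
    LowerSemicontinuous (JT h) :=
  lowerSemicontinuous_iSup (f := fun r p => (coupling r p : EReal) - h r) fun r =>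
    (continuous_coe_sub (coupling r).continuous (h r)).lowerSemicontinuous

theorem coupling_sub_pairingFn (p q : X × StrongDual ℝ X) :
    coupling q p - pairingFn q = pairingFn p - (p.2 - q.2) (p.1 - q.1) := by
  simp only [coupling_apply, pairingFn, sub_apply, map_sub]
  ring

theorem MaximalMonotoneOp.exists_mem_apply_sub_nonpos {T : Set (X × StrongDual ℝ X)}
    (hT : MaximalMonotoneOp T) (p : X × StrongDual ℝ X) :
    ∃ q ∈ T, (p.2 - q.2) (p.1 - q.1) ≤ 0 := by
  by_cases hp : p ∈ T
  · exact ⟨p, hp, by simp⟩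
  · contrapose! hp
    exact hT.2 p fun q hq => (hp q hq).le

theorem pairingFn_le_JT {T : Set (X × StrongDual ℝ X)} (hT : MaximalMonotoneOp T)
    {h : X × StrongDual ℝ X → EReal} (hle : ∀ q ∈ T, h q ≤ pairingFn q)
    (p : X × StrongDual ℝ X) : (pairingFn p : EReal) ≤ JT h p := by
  obtain ⟨q, hqT, hq⟩ := hT.exists_mem_apply_sub_nonpos p
  calc (pairingFn p : EReal)
      ≤ ((coupling q p - pairingFn q : ℝ) : EReal) := by
        rw [EReal.coe_le_coe_iff, coupling_sub_pairingFn]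
        linarith
    _ ≤ (coupling q p : EReal) - h q := by
        rw [EReal.coe_sub]
        exact EReal.sub_le_sub le_rfl (hle q hqT)
    _ ≤ JT h p := coupling_sub_le_JT h p q

theorem pairingFn_segment (p q : X × StrongDual ℝ X) (t : ℝ) :
    pairingFn ((1 - t) • p + t • q) =
      pairingFn p + t * (coupling q p - 2 * pairingFn p) + t ^ 2 * pairingFn (q - p) := by
  simp only [pairingFn, coupling_apply, Prod.fst_add, Prod.snd_add, Prod.smul_fst,
    Prod.smul_snd, Prod.fst_sub, Prod.snd_sub, map_add, map_sub, map_smul,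
    add_apply, sub_apply,
    smul_apply, smul_eq_mul]
  ring

theorem le_of_forall_add_mul_le {a b c : ℝ} (h : ∀ t, 0 < t → t ≤ 1 → a + t * b ≤ c) :
    a ≤ c := by
  have hlim : Filter.Tendsto (fun t => a + t * b) (nhdsWithin 0 (Set.Ioi 0)) (nhds a) := by
    have : Filter.Tendsto (fun t : ℝ => a + t * b) (nhds 0) (nhds (a + 0 * b)) :=
      (continuous_const.add (continuous_id.mul continuous_const)).tendsto 0
    simpa using this.mono_left nhdsWithin_le_nhds
  refine le_of_tendsto hlim ?_
  filter_upwards [Ioc_mem_nhdsGT zero_lt_one] with t ht using h t ht.1 ht.2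

/-- Differentiating the convexity inequality along the segment from `p` to `q` at `p`, where
`h` touches the duality product from above. -/
theorem coupling_sub_pairingFn_le {h : X × StrongDual ℝ X → EReal} (hconv : EConvexOn h)
    (hge : ∀ q, (pairingFn q : EReal) ≤ h q) {p q : X × StrongDual ℝ X}
    (hp : h p = pairingFn p) {c : ℝ} (hq : h q = c) :
    coupling q p - pairingFn p ≤ c := by
  refine le_of_forall_add_mul_le (b := pairingFn (q - p)) fun t ht ht1 => ?_
  have hseg : pairingFn ((1 - t) • p + t • q) ≤ (1 - t) * pairingFn p + t * c := by
    have := (hge _).trans (hconv p q (1 - t) t (by linarith) ht.le (by ring))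
    rwa [hp, hq, ← EReal.coe_mul, ← EReal.coe_mul, ← EReal.coe_add,
      EReal.coe_le_coe_iff] at this
  rw [pairingFn_segment] at hseg
  nlinarith

theorem JT_le_pairingFn {h : X × StrongDual ℝ X → EReal} (hconv : EConvexOn h)
    (hge : ∀ q, (pairingFn q : EReal) ≤ h q) {p : X × StrongDual ℝ X}
    (hp : h p = pairingFn p) : JT h p ≤ pairingFn p := by
  refine iSup_le fun q => ?_
  induction hq : h q with
  | bot => exact absurd hq (ne_bot_of_le_ne_bot (EReal.coe_ne_bot _) (hge q))
  | top => simp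
  | coe c =>
    rw [← EReal.coe_sub, EReal.coe_le_coe_iff]
    have := coupling_sub_pairingFn_le hconv hge hp hq
    rw [coupling_apply] at this
    linarith

theorem JT_mem_HT_general
    (T : Set (X × StrongDual ℝ X)) (hT : MaximalMonotoneOp T)
    (h : X × StrongDual ℝ X → EReal) (hh : h ∈ HT T) :
    JT h ∈ HT T := by
  obtain ⟨hconv, -, hge, heqT⟩ := hh
  have hge_JT := pairingFn_le_JT hT fun q hq => (heqT q hq).le
  refine ⟨econvexOn_JT fun q => ne_bot_of_le_ne_bot (EReal.coe_ne_bot _) (hge q),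
    lowerSemicontinuous_JT h, hge_JT, fun p hp => ?_⟩
  exact le_antisymm (JT_le_pairingFn hconv hge (heqT p hp)) (hge_JT p)

/-- the family `H(T)` is invariant under `J`. -/
theorem JT_mem_HT [CompleteSpace X]
    (T : Set (X × StrongDual ℝ X)) (hT : MaximalMonotoneOp T)
    (h : X × StrongDual ℝ X → EReal) (hh : h ∈ HT T) :
    JT h ∈ HT T :=
  JT_mem_HT_general T hT h hh
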